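/- Let d ≥ 2, 0 < R0 < R1, let χ be an admissible transition function for (R0, R1), and set c_χ := sup_{r>0} r χ′(r). Let q, μ > 0 with q + μ ≤ 2, let U ⊆ ℝ^d be a bounded measurable set, and let v : ℝ^d → ℂ be continuously differentiable. Then ∫_U [ 2|∂_d v|² (1 − χ(r)) + (2−q)|∇v|² χ(r) + 2 r |∂_r v|² χ′(r) ] dx − 2 Re ∫_U x_d ∂_r v conj(∂_d v) χ′(r) dx ≥ (2 − q − μ − c_χ/2) ∫_U |∂_d v|² dx + μ ∫_U |∇v|² χ(r) dx, where r := |x| and the integrands involving ∂_r v are interpreted as 0 at x = 0 (this is consistent since χ′(|x|) = 0 for |x| ≤ R0). -/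

import Mathlib

open MeasureTheory
open scoped BigOperators ComplexConjugate Classical

noncomputable section

/-- `χ : ℝ → ℝ` is an *admissible transition function* for `(R0, R1)`. -/
structure IsAdmissibleTransition (R0 R1 : ℝ) (χ : ℝ → ℝ) : Prop where
  contDiffOn : ContDiffOn ℝ 3 χ (Set.Ici 0)
  eq_zero : ∀ r, 0 ≤ r → r ≤ R0 → χ r = 0
  eq_one : ∀ r, R1 ≤ r → χ r = 1
  mem_Ioo : ∀ r, R0 < r → r < R1 → χ r ∈ Set.Ioo (0 : ℝ) 1
  deriv_nonneg : ∀ r : ℝ, 0 < r → 0 ≤ r * deriv χ r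
  deriv_lt_four : ∀ r : ℝ, 0 < r → r * deriv χ r < 4

/-- Partial derivative of a complex-valued function in the `i`-th coordinate direction. -/
def cpd (d : ℕ) (f : EuclideanSpace ℝ (Fin d) → ℂ) (i : Fin d)
    (x : EuclideanSpace ℝ (Fin d)) : ℂ :=
  fderiv ℝ f x (EuclideanSpace.single i 1)

/-- `|∇f|² = Σ_j |∂_j f|²`. -/
def gradsq (d : ℕ) (f : EuclideanSpace ℝ (Fin d) → ℂ) (x : EuclideanSpace ℝ (Fin d)) : ℝ :=
  ∑ i, ‖cpd d f i x‖ ^ 2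

/-- The radial derivative `∂_r v(x) = x·∇v(x)/|x|`, interpreted as `0` at `x = 0`. -/
def rder (d : ℕ) (f : EuclideanSpace ℝ (Fin d) → ℂ) (x : EuclideanSpace ℝ (Fin d)) : ℂ :=
  if x = 0 then 0 else (∑ i, ((x i : ℝ) : ℂ) * cpd d f i x) / ((‖x‖ : ℝ) : ℂ)

/-- `c_χ := sup_{r > 0} r χ′(r)`. -/
def cchi (χ : ℝ → ℝ) : ℝ :=
  sSup ((fun r => r * deriv χ r) '' Set.Ioi (0 : ℝ))

/-!
The inequality holds pointwise. Put `s = r χ'(r) ∈ [0, c_χ]` (so `s = 0` at the origin).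
As `|x_d| ≤ r`, the cross term is at most `2 s |∂_r v| |∂_d v|`, and completing the square gives
`2 s |∂_r v|² - 2 s |∂_r v| |∂_d v| ≥ -s |∂_d v|² / 2 ≥ -c_χ |∂_d v|² / 2`; the remaining terms are
compared using `|∂_d v|² ≤ |∇v|²`, `0 ≤ χ ≤ 1` and `0 ≤ q + μ ≤ 2`.
Since `χ'` enters only through `s < 4` and `|∂_r v| ≤ ‖Dv(x)‖`, every integrand is bounded by a
multiple of `‖Dv‖²`, hence integrable on the bounded set `U`.
-/

open Set

namespace IsAdmissibleTransition

variable {R0 R1 : ℝ} {χ : ℝ → ℝ}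

theorem mem_Icc (hχ : IsAdmissibleTransition R0 R1 χ) {r : ℝ} (hr : 0 ≤ r) : χ r ∈ Icc 0 1 := by
  rcases le_or_gt r R0 with h0 | h0
  · simp [hχ.eq_zero r hr h0]
  rcases lt_or_ge r R1 with h1 | h1
  · exact Ioo_subset_Icc_self (hχ.mem_Ioo r h0 h1)
  · simp [hχ.eq_one r h1]

theorem four_mem_upperBounds (hχ : IsAdmissibleTransition R0 R1 χ) :
    4 ∈ upperBounds ((fun r => r * deriv χ r) '' Ioi 0) :=
  forall_mem_image.2 fun r hr => (hχ.deriv_lt_four r hr).le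

theorem mul_deriv_le_cchi (hχ : IsAdmissibleTransition R0 R1 χ) {r : ℝ} (hr : 0 < r) :
    r * deriv χ r ≤ cchi χ :=
  le_csSup ⟨4, hχ.four_mem_upperBounds⟩ ⟨r, hr, rfl⟩

theorem cchi_le_four (hχ : IsAdmissibleTransition R0 R1 χ) : cchi χ ≤ 4 :=
  csSup_le (nonempty_Ioi.image _) hχ.four_mem_upperBounds

theorem mul_deriv_mem_Icc (hχ : IsAdmissibleTransition R0 R1 χ) {r : ℝ} (hr : 0 ≤ r) :
    r * deriv χ r ∈ Icc 0 (cchi χ) := by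
  rcases hr.eq_or_lt with rfl | hr
  · simpa using (hχ.deriv_nonneg 1 one_pos).trans (hχ.mul_deriv_le_cchi one_pos)
  · exact ⟨hχ.deriv_nonneg r hr, hχ.mul_deriv_le_cchi hr⟩

theorem continuous_comp_norm {E : Type*} [SeminormedAddCommGroup E]
    (hχ : IsAdmissibleTransition R0 R1 χ) : Continuous fun x : E => χ ‖x‖ :=
  hχ.contDiffOn.continuousOn.comp_continuous continuous_norm fun x => norm_nonneg x

end IsAdmissibleTransition

section Derivatives

variable {d : ℕ} (f : EuclideanSpace ℝ (Fin d) → ℂ) (x : EuclideanSpace ℝ (Fin d))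

theorem norm_cpd_le (i : Fin d) : ‖cpd d f i x‖ ≤ ‖fderiv ℝ f x‖ := by
  simpa [cpd] using (fderiv ℝ f x).le_opNorm (EuclideanSpace.single i 1)

theorem sq_norm_cpd_le_gradsq (i : Fin d) : ‖cpd d f i x‖ ^ 2 ≤ gradsq d f x :=
  Finset.single_le_sum (f := fun i => ‖cpd d f i x‖ ^ 2) (fun _ _ => sq_nonneg _)
    (Finset.mem_univ i)

theorem rder_eq_fderiv : rder d f x = fderiv ℝ f x (‖x‖⁻¹ • x) := by
  rcases eq_or_ne x 0 with rfl | hx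
  · simp [rder]
  have hsum : ∑ i, ((x i : ℝ) : ℂ) * cpd d f i x = fderiv ℝ f x x := by
    rw [← congrArg (fderiv ℝ f x) ((EuclideanSpace.basisFun (Fin d) ℝ).sum_repr x)]
    simp [cpd, map_sum, Complex.real_smul]
  rw [rder, if_neg hx, hsum, map_smul, Complex.real_smul, div_eq_inv_mul, Complex.ofReal_inv]

theorem norm_rder_le : ‖rder d f x‖ ≤ ‖fderiv ℝ f x‖ := by
  rw [rder_eq_fderiv]
  refine ((fderiv ℝ f x).le_opNorm _).trans (mul_le_of_le_one_right (norm_nonneg _) ?_)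
  rw [norm_smul, norm_inv, norm_norm]
  exact inv_mul_le_one_of_le₀ le_rfl (norm_nonneg _)

variable {f}

theorem continuous_cpd (hf : ContDiff ℝ 1 f) (i : Fin d) : Continuous (cpd d f i) :=
  (hf.continuous_fderiv one_ne_zero).clm_apply continuous_const

theorem continuous_gradsq (hf : ContDiff ℝ 1 f) : Continuous (gradsq d f) :=
  continuous_finsetSum _ fun i _ => (continuous_cpd hf i).norm.pow 2

theorem measurable_rder (hf : ContDiff ℝ 1 f) : Measurable (rder d f) := by
  simp_rw [funext (rder_eq_fderiv f)]
  have := (hf.continuous_fderiv one_ne_zero).measurable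
  fun_prop

end Derivatives

theorem MeasureTheory.IntegrableOn.of_norm_le_continuous {E F : Type*} [MetricSpace E]
    [ProperSpace E] [MeasurableSpace E] [OpensMeasurableSpace E] [NormedAddCommGroup F]
    {μ : Measure E} [IsFiniteMeasureOnCompacts μ] {U : Set E} (hU : Bornology.IsBounded U)
    {f : E → F} {g : E → ℝ} (hg : Continuous g) (hf : AEStronglyMeasurable f (μ.restrict U))
    (hfg : ∀ x, ‖f x‖ ≤ g x) : IntegrableOn f U μ :=
  ((hg.continuousOn.integrableOn_compact hU.isCompact_closure).mono_set subset_closure).mono'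
    hf (ae_of_all _ hfg)

theorem Continuous.integrableOn_of_isBounded {E F : Type*} [MetricSpace E]
    [ProperSpace E] [MeasurableSpace E] [OpensMeasurableSpace E] [NormedAddCommGroup F]
    {μ : Measure E} [IsFiniteMeasureOnCompacts μ] {U : Set E} (hU : Bornology.IsBounded U)
    {f : E → F} (hf : Continuous f) : IntegrableOn f U μ :=
  .of_norm_le_continuous hU hf.norm hf.aestronglyMeasurable fun _ => le_rfl

theorem transition_density_le {q μ c r p t a b G w : ℝ} (hqμ0 : 0 ≤ q + μ) (hqμ : q + μ ≤ 2)
    (hrp : r * p ∈ Icc 0 c) (ht : t ∈ Icc 0 1) (hbG : b ^ 2 ≤ G) (hw : w ≤ r * p * a * b) :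
    (2 - q - μ - c / 2) * b ^ 2 + μ * (G * t)
      ≤ 2 * b ^ 2 * (1 - t) + (2 - q) * G * t + 2 * r * a ^ 2 * p - 2 * w := by
  nlinarith [mul_nonneg hrp.1 (sq_nonneg (a - b / 2)),
    mul_nonneg (mul_nonneg (by linarith : (0:ℝ) ≤ 2 - q - μ) (sub_nonneg.2 hbG)) ht.1,
    mul_nonneg (mul_nonneg hqμ0 (sq_nonneg b)) (sub_nonneg.2 ht.2),
    mul_nonneg (sub_nonneg.2 hrp.2) (sq_nonneg b)]

theorem norm_coord_mul_conj_le {d : ℕ} (x : EuclideanSpace ℝ (Fin d)) (j : Fin d) (z w : ℂ)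
    {p : ℝ} (hp : 0 ≤ ‖x‖ * p) :
    ‖((x j : ℝ) : ℂ) * z * conj w * (p : ℂ)‖ ≤ ‖x‖ * p * ‖z‖ * ‖w‖ := by
  have hxj : |x j| * |p| ≤ ‖x‖ * p := by
    rw [← abs_of_nonneg hp, abs_mul, abs_norm]
    exact mul_le_mul_of_nonneg_right (by simpa using PiLp.norm_apply_le x j) (abs_nonneg p)
  simp only [norm_mul, Complex.norm_real, Complex.norm_conj, Real.norm_eq_abs]
  nlinarith [mul_le_mul_of_nonneg_right hxj (mul_nonneg (norm_nonneg z) (norm_nonneg w))]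

section TransitionEnergy

variable {d : ℕ} {R0 R1 : ℝ} {χ : ℝ → ℝ} {U : Set (EuclideanSpace ℝ (Fin d))}
  {v : EuclideanSpace ℝ (Fin d) → ℂ}

theorem integrableOn_radial_term (hχ : IsAdmissibleTransition R0 R1 χ)
    (hU : Bornology.IsBounded U) (hv : ContDiff ℝ 1 v) :
    IntegrableOn (fun x => 2 * ‖x‖ * ‖rder d v x‖ ^ 2 * deriv χ ‖x‖) U := by
  have hF := hv.continuous_fderiv one_ne_zero
  have hrder := measurable_rder hv
  have hderiv := measurable_deriv χ
  refine .of_norm_le_continuous hU (g := fun x => 8 * ‖fderiv ℝ v x‖ ^ 2) (by fun_prop)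
    (by fun_prop : Measurable _).aestronglyMeasurable fun x => ?_
  have ha := pow_le_pow_left₀ (norm_nonneg _) (norm_rder_le v x) 2
  have hs := hχ.mul_deriv_mem_Icc (norm_nonneg x)
  rw [Real.norm_eq_abs, abs_le]
  constructor <;> nlinarith [mul_le_mul ha (hs.2.trans hχ.cchi_le_four) hs.1 (sq_nonneg _),
    mul_nonneg (sq_nonneg ‖rder d v x‖) hs.1]

theorem integrableOn_cross_term (hχ : IsAdmissibleTransition R0 R1 χ)
    (hU : Bornology.IsBounded U) (hv : ContDiff ℝ 1 v) (j : Fin d) :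
    IntegrableOn (fun x => ((x j : ℝ) : ℂ) * rder d v x * conj (cpd d v j x)
      * ((deriv χ ‖x‖ : ℝ) : ℂ)) U := by
  have hF := hv.continuous_fderiv one_ne_zero
  have hrder := measurable_rder hv
  have hderiv := measurable_deriv χ
  have hcpd := continuous_cpd hv j
  refine .of_norm_le_continuous hU (g := fun x => 4 * ‖fderiv ℝ v x‖ ^ 2) (by fun_prop)
    (by fun_prop : Measurable _).aestronglyMeasurable fun x => ?_
  have hs := hχ.mul_deriv_mem_Icc (norm_nonneg x)
  have hab := mul_le_mul (norm_rder_le v x) (norm_cpd_le v x j) (norm_nonneg _) (norm_nonneg _)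
  refine (norm_coord_mul_conj_le x j _ _ hs.1).trans ?_
  nlinarith [mul_le_mul (hs.2.trans hχ.cchi_le_four) hab
    (mul_nonneg (norm_nonneg _) (norm_nonneg _)) zero_le_four]

theorem integrableOn_energy_density (hχ : IsAdmissibleTransition R0 R1 χ) (q : ℝ)
    (hU : Bornology.IsBounded U) (hv : ContDiff ℝ 1 v) (j : Fin d) :
    IntegrableOn (fun x => 2 * ‖cpd d v j x‖ ^ 2 * (1 - χ ‖x‖)
      + (2 - q) * gradsq d v x * χ ‖x‖ + 2 * ‖x‖ * ‖rder d v x‖ ^ 2 * deriv χ ‖x‖) U := by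
  have hχc : Continuous fun x : EuclideanSpace ℝ (Fin d) => χ ‖x‖ := hχ.continuous_comp_norm
  have hcpd := continuous_cpd hv j
  have hgrad := continuous_gradsq hv
  refine .add (.add (Continuous.integrableOn_of_isBounded hU ?_)
    (Continuous.integrableOn_of_isBounded hU ?_)) (integrableOn_radial_term hχ hU hv)
  · exact ((hcpd.norm.pow 2).const_mul 2).mul (continuous_const.sub hχc)
  · exact (hgrad.const_mul _).mul hχc

theorem transition_energy_inequality_coord (hχ : IsAdmissibleTransition R0 R1 χ) {q μ : ℝ}
    (hqμ0 : 0 ≤ q + μ) (hqμ : q + μ ≤ 2) (hU : Bornology.IsBounded U)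
    (hv : ContDiff ℝ 1 v) (j : Fin d) :
    (∫ x in U,
        (2 * ‖cpd d v j x‖ ^ 2 * (1 - χ ‖x‖)
          + (2 - q) * gradsq d v x * χ ‖x‖
          + 2 * ‖x‖ * ‖rder d v x‖ ^ 2 * deriv χ ‖x‖))
      - 2 * (∫ x in U,
          ((x j : ℝ) : ℂ) * rder d v x * conj (cpd d v j x) * ((deriv χ ‖x‖ : ℝ) : ℂ)).re
      ≥ (2 - q - μ - cchi χ / 2) * (∫ x in U, ‖cpd d v j x‖ ^ 2)
        + μ * ∫ x in U, gradsq d v x * χ ‖x‖ := by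
  have hcpd := continuous_cpd hv j
  have hgrad := continuous_gradsq hv
  have hχc : Continuous fun x : EuclideanSpace ℝ (Fin d) => χ ‖x‖ := hχ.continuous_comp_norm
  have hcross := integrableOn_cross_term hχ hU hv j
  have hJ1 : IntegrableOn (fun x => ‖cpd d v j x‖ ^ 2) U :=
    (hcpd.norm.pow 2).integrableOn_of_isBounded hU
  have hJ2 : IntegrableOn (fun x => gradsq d v x * χ ‖x‖) U :=
    (hgrad.mul hχc).integrableOn_of_isBounded hU
  have hF1 := integrableOn_energy_density hχ q hU hv j
  have hRe : IntegrableOn (fun x => 2 * (((x j : ℝ) : ℂ) * rder d v x * conj (cpd d v j x)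
      * ((deriv χ ‖x‖ : ℝ) : ℂ)).re) U :=
    hcross.re.const_mul 2
  have hF : IntegrableOn (fun x => 2 * ‖cpd d v j x‖ ^ 2 * (1 - χ ‖x‖)
      + (2 - q) * gradsq d v x * χ ‖x‖ + 2 * ‖x‖ * ‖rder d v x‖ ^ 2 * deriv χ ‖x‖
      - 2 * (((x j : ℝ) : ℂ) * rder d v x * conj (cpd d v j x)
        * ((deriv χ ‖x‖ : ℝ) : ℂ)).re) U :=
    hF1.sub hRe
  calc (2 - q - μ - cchi χ / 2) * (∫ x in U, ‖cpd d v j x‖ ^ 2)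
        + μ * ∫ x in U, gradsq d v x * χ ‖x‖
      = ∫ x in U, ((2 - q - μ - cchi χ / 2) * ‖cpd d v j x‖ ^ 2
          + μ * (gradsq d v x * χ ‖x‖)) := by
        rw [integral_add (hJ1.const_mul _) (hJ2.const_mul _), integral_const_mul,
          integral_const_mul]
    _ ≤ ∫ x in U, (2 * ‖cpd d v j x‖ ^ 2 * (1 - χ ‖x‖) + (2 - q) * gradsq d v x * χ ‖x‖
          + 2 * ‖x‖ * ‖rder d v x‖ ^ 2 * deriv χ ‖x‖
          - 2 * (((x j : ℝ) : ℂ) * rder d v x * conj (cpd d v j x)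
            * ((deriv χ ‖x‖ : ℝ) : ℂ)).re) := by
        refine integral_mono ((hJ1.const_mul _).add (hJ2.const_mul μ)) hF fun x => ?_
        have hs := hχ.mul_deriv_mem_Icc (norm_nonneg x)
        exact transition_density_le hqμ0 hqμ hs (hχ.mem_Icc (norm_nonneg x))
          (sq_norm_cpd_le_gradsq v x j)
          ((Complex.re_le_norm _).trans (norm_coord_mul_conj_le x j _ _ hs.1))
    _ = _ := by
        rw [integral_sub hF1 hRe, integral_const_mul]
        exact congrArg (_ - 2 * ·) (integral_re hcross)

end TransitionEnergy

/-- Lemma 3.3 of the paper: for `χ` an admissible transition function for `(R0, R1)`,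
`q, μ > 0` with `q + μ ≤ 2`, `U ⊆ ℝ^d` bounded and measurable, and `v : ℝ^d → ℂ`
continuously differentiable:
`∫_U [2|∂_d v|²(1 − χ(r)) + (2−q)|∇v|²χ(r) + 2r|∂_r v|²χ′(r)] dx`
`− 2 Re ∫_U x_d ∂_r v conj(∂_d v) χ′(r) dx`
`≥ (2 − q − μ − c_χ/2) ∫_U |∂_d v|² dx + μ ∫_U |∇v|²χ(r) dx`. -/
theorem transition_energy_inequality (d : ℕ) (hd : 2 ≤ d) (R0 R1 : ℝ)
    (χ : ℝ → ℝ) (hχ : IsAdmissibleTransition R0 R1 χ)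
    (q μ : ℝ) (hq : 0 < q) (hμ : 0 < μ) (hqμ : q + μ ≤ 2)
    (U : Set (EuclideanSpace ℝ (Fin d))) (hUb : Bornology.IsBounded U)
    (v : EuclideanSpace ℝ (Fin d) → ℂ) (hv : ContDiff ℝ 1 v) :
    (∫ x in U,
        (2 * ‖cpd d v ⟨d - 1, by omega⟩ x‖ ^ 2 * (1 - χ ‖x‖)
          + (2 - q) * gradsq d v x * χ ‖x‖
          + 2 * ‖x‖ * ‖rder d v x‖ ^ 2 * deriv χ ‖x‖))
      - 2 * (∫ x in U,
          ((x ⟨d - 1, by omega⟩ : ℝ) : ℂ) * rder d v x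
            * conj (cpd d v ⟨d - 1, by omega⟩ x) * ((deriv χ ‖x‖ : ℝ) : ℂ)).re
      ≥ (2 - q - μ - cchi χ / 2) * (∫ x in U, ‖cpd d v ⟨d - 1, by omega⟩ x‖ ^ 2)
        + μ * ∫ x in U, gradsq d v x * χ ‖x‖ :=
  transition_energy_inequality_coord hχ (by linarith) hqμ hUb hv _
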